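/- arXiv:2007.05771 — 6 statements merged into one kernel-verified Lean document; each statement's English description precedes it below -/
import Mathlib

section
/- For every positive integer $b$ and every integer $k \ge 2$, there exists a set $\{n_1, \dots, n_k\}$ of positive integers with $n_1 < n_2 < \cdots < n_k$ such that for all $1 \le i < j \le k$, the number $n_j - n_i$ divides $n_j$ and moreover $b$ divides $n_j/(n_j - n_i)$. -/
/-!
If `x₀ < ⋯ < x_{k-1}` satisfy `b (x_j - x_i) ∣ x_i (x_j - 1)`, then `n_i = C - C / x_i` with
`C = ∏ x_l` works: writing `C = x_i x_j c` gives `n_j - n_i = c (x_j - x_i)` and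
`n_j = c x_i (x_j - 1)`.

Such `x` are `x_i = s^{e_i} b^{F - e_i}` with `s = b + 1`, where `e` is a classical sequence whose
gaps divide the larger term (`{L} ∪ (L + e)` with `L = ∏ e`, by induction), and `F` is a multiple
of a totient chosen so that `b^F ≡ 1` modulo every `s^D - b^D`, `D = e_j - e_i`. Then
`x_j - x_i = W (s^D - b^D)` with `x_i = W b^D`, while `x_j ≡ b^{e_j} b^{F - e_j} = b^F ≡ 1`.
-/

theorem exists_strictMono_sub_dvd (k : ℕ) :
    ∃ e : Fin k → ℕ, StrictMono e ∧ (∀ i, 0 < e i) ∧ ∀ i j, i < j → e j - e i ∣ e j := by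
  induction k with
  | zero => exact ⟨finZeroElim, fun i => i.elim0, fun i => i.elim0, fun i => i.elim0⟩
  | succ k ih =>
    obtain ⟨e, he_mono, he_pos, he_dvd⟩ := ih
    set L := ∏ i, e i
    have hL : 0 < L := Finset.prod_pos fun i _ => he_pos i
    have he_dvd_L (i : Fin k) : e i ∣ L := Finset.dvd_prod_of_mem e (Finset.mem_univ i)
    set e' : Fin (k + 1) → ℕ := Fin.cons L (L + e ·)
    have key (i j : Fin (k + 1)) (hij : i < j) : e' i < e' j ∧ e' j - e' i ∣ e' j := by
      cases j using Fin.cases with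
      | zero => exact absurd hij (Fin.not_lt_zero i)
      | succ j =>
        cases i using Fin.cases with
        | zero =>
          simp only [e', Fin.cons_zero, Fin.cons_succ, Nat.add_sub_cancel_left]
          exact ⟨Nat.lt_add_of_pos_right (he_pos j), dvd_add (he_dvd_L j) dvd_rfl⟩
        | succ i =>
          rw [Fin.succ_lt_succ_iff] at hij
          simp only [e', Fin.cons_succ, Nat.add_sub_add_left]
          exact ⟨Nat.add_lt_add_left (he_mono hij) L,
            dvd_add ((he_dvd i j hij).trans (he_dvd_L j)) (he_dvd i j hij)⟩
    refine ⟨e', fun i j hij => (key i j hij).1, fun i => ?_, fun i j hij => (key i j hij).2⟩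
    cases i using Fin.cases with
    | zero => exact hL
    | succ i => exact Nat.add_pos_left hL _

theorem sub_div_gap_dvd {b xi xj c C : ℕ} (hi : 0 < xi) (hij : xi < xj) (hc : 0 < c)
    (hC : C = xi * xj * c) (h : b * (xj - xi) ∣ xi * (xj - 1)) :
    C - C / xi < C - C / xj ∧ (C - C / xj) - (C - C / xi) ∣ C - C / xj ∧
      b ∣ (C - C / xj) / ((C - C / xj) - (C - C / xi)) := by
  have hdiv_i : C / xi = xj * c := by rw [hC, mul_assoc, Nat.mul_div_cancel_left _ hi]
  have hdiv_j : C / xj = xi * c := by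
    rw [hC, mul_comm xi xj, mul_assoc, Nat.mul_div_cancel_left _ (hi.trans hij)]
  have hlt : xi * c < xj * c := Nat.mul_lt_mul_of_pos_right hij hc
  have hle : xj * c ≤ C := hC ▸ mul_assoc xi xj c ▸ Nat.le_mul_of_pos_left _ hi
  have hgap : (C - C / xj) - (C - C / xi) = c * (xj - xi) := by
    rw [hdiv_i, hdiv_j, tsub_tsub_tsub_cancel_left hle, ← Nat.sub_mul, mul_comm]
  obtain ⟨q, hq⟩ := h
  have htop : C - C / xj = c * (xj - xi) * (b * q) := by
    have hnj : C - C / xj = c * (xi * (xj - 1)) := by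
      rw [hdiv_j, hC, Nat.mul_sub_one, Nat.mul_sub]; ring_nf
    rw [hnj, hq]; ring
  have hgap_pos : 0 < c * (xj - xi) := Nat.mul_pos hc (Nat.sub_pos_of_lt hij)
  refine ⟨by omega, ?_, ?_⟩
  · rw [hgap, htop]; exact Dvd.intro _ rfl
  · rw [hgap, htop, Nat.mul_div_cancel_left _ hgap_pos]; exact Dvd.intro _ rfl

theorem mul_dvd_prod_of_ne {k : ℕ} (x : Fin k → ℕ) {i j : Fin k} (hij : i ≠ j) :
    x i * x j ∣ ∏ l, x l := by
  rw [← Finset.prod_pair hij]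
  exact Finset.prod_dvd_prod_of_subset _ _ _ (Finset.subset_univ _)

theorem exists_gap_dvd_of_reciprocal {b k : ℕ} {x : Fin k → ℕ} (hx_mono : StrictMono x)
    (hx : ∀ i, 2 ≤ x i) (h : ∀ i j, i < j → b * (x j - x i) ∣ x i * (x j - 1)) :
    ∃ n : Fin k → ℕ, StrictMono n ∧ (∀ i, 0 < n i) ∧
      ∀ i j, i < j → n j - n i ∣ n j ∧ b ∣ n j / (n j - n i) := by
  set C := ∏ l, x l
  have hC : 0 < C := Finset.prod_pos fun i _ => by have := hx i; omega
  set n : Fin k → ℕ := fun i => C - C / x i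
  have pair (i j : Fin k) (hij : i < j) :
      n i < n j ∧ n j - n i ∣ n j ∧ b ∣ n j / (n j - n i) := by
    obtain ⟨c, hc⟩ := mul_dvd_prod_of_ne x hij.ne
    have hc_pos : 0 < c := Nat.pos_of_mul_pos_left (hc ▸ hC : 0 < x i * x j * c)
    exact sub_div_gap_dvd (by have := hx i; omega) (hx_mono hij) hc_pos hc (h i j hij)
  exact ⟨n, fun i j hij => (pair i j hij).1,
    fun i => Nat.sub_pos_of_lt (Nat.div_lt_self hC (hx i)), fun i j hij => (pair i j hij).2⟩

theorem coprime_pow_sub_pow {b s : ℕ} (h : b.Coprime s) (hbs : b ≤ s) {D : ℕ} (hD : 0 < D) :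
    b.Coprime (s ^ D - b ^ D) := by
  have hsplit : s ^ D = (s ^ D - b ^ D) + b ^ (D - 1) * b := by
    rw [← pow_succ, Nat.sub_add_cancel hD, Nat.sub_add_cancel (Nat.pow_le_pow_left hbs D)]
  exact (Nat.coprime_add_mul_right_right _ _ _).mp (hsplit ▸ h.pow_right D)

theorem pow_modEq_pow_of_dvd {b s D e : ℕ} (hbs : b ≤ s) (hD : D ∣ e) :
    s ^ e ≡ b ^ e [MOD s ^ D - b ^ D] := by
  obtain ⟨t, rfl⟩ := hD
  rw [pow_mul, pow_mul]
  exact ((Nat.modEq_iff_dvd' (Nat.pow_le_pow_left (Nat.pow_le_pow_left hbs D) t)).mpr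
    (Nat.sub_dvd_pow_sub_pow _ _ t)).symm

theorem exists_ge_pow_modEq_one {b P : ℕ} (hP : 0 < P) (h : b.Coprime P) (N : ℕ) :
    ∃ F, N ≤ F ∧ b ^ F ≡ 1 [MOD P] := by
  refine ⟨P.totient * N, Nat.le_mul_of_pos_left N (Nat.totient_pos.mpr hP), ?_⟩
  rw [pow_mul]
  simpa only [one_pow] using (Nat.ModEq.pow_totient h).pow N

theorem pow_mul_pow_reciprocal_dvd {b s ei ej F : ℕ} (hb : 0 < b) (hbs : b < s) (hij : ei < ej)
    (hdvd : ej - ei ∣ ej) (hF : ej ≤ F)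
    (hmod : b ^ F ≡ 1 [MOD s ^ (ej - ei) - b ^ (ej - ei)]) :
    s ^ ei * b ^ (F - ei) < s ^ ej * b ^ (F - ej) ∧
      b * (s ^ ej * b ^ (F - ej) - s ^ ei * b ^ (F - ei)) ∣
        s ^ ei * b ^ (F - ei) * (s ^ ej * b ^ (F - ej) - 1) := by
  set D := ej - ei
  have hD : 0 < D := Nat.sub_pos_of_lt hij
  have hs : 0 < s := hb.trans hbs
  have hxj_modEq : s ^ ej * b ^ (F - ej) ≡ 1 [MOD s ^ D - b ^ D] :=
    calc s ^ ej * b ^ (F - ej) ≡ b ^ ej * b ^ (F - ej) [MOD s ^ D - b ^ D] :=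
          (pow_modEq_pow_of_dvd hbs.le hdvd).mul_right _
      _ = b ^ F := by rw [← pow_add, Nat.add_sub_cancel' hF]
      _ ≡ 1 [MOD s ^ D - b ^ D] := hmod
  have hxj_dvd := (Nat.modEq_iff_dvd' (Nat.one_le_iff_ne_zero.mpr (by positivity))).mp
    hxj_modEq.symm
  have hxi : s ^ ei * b ^ (F - ei) = s ^ ei * b ^ (F - ej) * b ^ D := by
    rw [mul_assoc, ← pow_add]; congr 2; omega
  have hxj : s ^ ej * b ^ (F - ej) = s ^ ei * b ^ (F - ej) * s ^ D := by
    rw [mul_right_comm, ← pow_add]; congr 2; omega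
  have hW : 0 < s ^ ei * b ^ (F - ej) := by positivity
  rw [hxj] at hxj_dvd
  rw [hxi, hxj]
  generalize s ^ ei * b ^ (F - ej) = W at *
  rw [← Nat.mul_sub, mul_left_comm, mul_assoc]
  exact ⟨Nat.mul_lt_mul_of_pos_left (Nat.pow_lt_pow_left hbs hD.ne') hW,
    mul_dvd_mul_left W (mul_dvd_mul (dvd_pow_self b hD.ne') hxj_dvd)⟩

theorem exists_reciprocal_dvd_seq {b : ℕ} (hb : 0 < b) (k : ℕ) :
    ∃ x : Fin k → ℕ, StrictMono x ∧ (∀ i, 2 ≤ x i) ∧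
      ∀ i j, i < j → b * (x j - x i) ∣ x i * (x j - 1) := by
  obtain ⟨e, he_mono, he_pos, he_dvd⟩ := exists_strictMono_sub_dvd k
  set s := b + 1
  have hbs : b < s := Nat.lt_succ_self b
  set M : Fin k → Fin k → ℕ := fun i j => s ^ (e j - e i) - b ^ (e j - e i)
  have hM (i j : Fin k) (hij : i < j) : 0 < M i j ∧ b.Coprime (M i j) := by
    have hD : 0 < e j - e i := Nat.sub_pos_of_lt (he_mono hij)
    exact ⟨Nat.sub_pos_of_lt (Nat.pow_lt_pow_left hbs hD.ne'),
      coprime_pow_sub_pow (Nat.coprime_self_add_right.mpr (Nat.coprime_one_right b)) hbs.le hD⟩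
  set P := ∏ j, ∏ i ∈ Finset.Iio j, M i j
  have hP : 0 < P :=
    Finset.prod_pos fun j _ => Finset.prod_pos fun i hi => (hM i j (Finset.mem_Iio.mp hi)).1
  have hbP : b.Coprime P := Nat.Coprime.prod_right fun j _ =>
    Nat.Coprime.prod_right fun i hi => (hM i j (Finset.mem_Iio.mp hi)).2
  have hM_dvd (i j : Fin k) (hij : i < j) : M i j ∣ P :=
    (Finset.dvd_prod_of_mem (M · j) (Finset.mem_Iio.mpr hij)).trans
      (Finset.dvd_prod_of_mem (fun j => ∏ i ∈ Finset.Iio j, M i j) (Finset.mem_univ j))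
  obtain ⟨F, hF, hbF⟩ := exists_ge_pow_modEq_one hP hbP (∑ i, e i)
  have he_le (i : Fin k) : e i ≤ F :=
    (Finset.single_le_sum (fun j _ => Nat.zero_le (e j)) (Finset.mem_univ i)).trans hF
  have pair (i j : Fin k) (hij : i < j) := pow_mul_pow_reciprocal_dvd hb hbs (he_mono hij)
    (he_dvd i j hij) (he_le j) (hbF.of_dvd (hM_dvd i j hij))
  refine ⟨fun i => s ^ e i * b ^ (F - e i), fun i j hij => (pair i j hij).1, fun i => ?_,
    fun i j hij => (pair i j hij).2⟩
  calc 2 ≤ s := by omega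
    _ ≤ s ^ e i := Nat.le_self_pow (he_pos i).ne' s
    _ ≤ s ^ e i * b ^ (F - e i) := Nat.le_mul_of_pos_right _ (by positivity)

theorem stmt0_general (b k : ℕ) (hb : 0 < b) :
    ∃ n : Fin k → ℕ, StrictMono n ∧ (∀ i, 0 < n i) ∧
      ∀ i j : Fin k, i < j →
        (n j - n i) ∣ n j ∧ b ∣ n j / (n j - n i) := by
  obtain ⟨x, hx_mono, hx, hrec⟩ := exists_reciprocal_dvd_seq hb k
  exact exists_gap_dvd_of_reciprocal hx_mono hx hrec

theorem stmt0 (b k : ℕ) (hb : 0 < b) (hk : 2 ≤ k) :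
    ∃ n : Fin k → ℕ, StrictMono n ∧ (∀ i, 0 < n i) ∧
      ∀ i j : Fin k, i < j →
        (n j - n i) ∣ n j ∧ b ∣ n j / (n j - n i) :=
  stmt0_general b k hb
end

section
/- Let $D$ be a positive integer divisible by $4$ and let $a$ be an integer divisible by $4$. Then there exist integers $v_1, v_2$ with $\gcd(D, v_1) = \gcd(D, v_2) = 1$ such that either $(v_1 - 1)(v_2 - 1) \equiv a \pmod{D}$ or $(v_1 + 1)(v_2 - 1) \equiv a \pmod{D}$. -/
/-!
Write `a = 4b` and pick a sign `ε = ±1` with `3 ∤ 2εb - 1`. If `u` is an integer such that `u`,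
`2u + 1` and `u + 2εb` are all prime to `D`, and `t` is an inverse of `u` modulo `D`, then
`v₁ = ε + 2bt` and `v₂ = 2u + 1` work: `(v₁ - ε)(v₂ - 1) = 4b · tu ≡ a`, and `v₁ u ≡ ε(u + 2εb)`.
Such a `u` exists by the Chinese remainder theorem, since `u(2u + 1)(u + 2εb)` avoids every prime
`p`: for `p = 2` take `u = 1`, for `p = 3` take `u = -1` (this is where the choice of `ε` enters),
and for `p ≥ 5` a cubic has at most three roots modulo `p`.
-/

open Polynomial

theorem Int.ModEq.isCoprime {m a b : ℤ} (h : a ≡ b [ZMOD m]) (hb : IsCoprime m b) :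
    IsCoprime m a := by
  obtain ⟨k, hk⟩ := h.dvd
  have := hb.add_mul_left_right (-k)
  rwa [show b + m * -k = a by linarith] at this

theorem IsCoprime.exists_modEq_and_modEq {m n : ℤ} (h : IsCoprime m n) (x y : ℤ) :
    ∃ u, u ≡ x [ZMOD m] ∧ u ≡ y [ZMOD n] := by
  obtain ⟨s, t, hst⟩ := h
  refine ⟨x * t * n + y * s * m, Int.modEq_iff_dvd.mpr ⟨(x - y) * s, ?_⟩,
    Int.modEq_iff_dvd.mpr ⟨(y - x) * t, ?_⟩⟩
  · linear_combination -x * hst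
  · linear_combination -y * hst

theorem Polynomial.isCoprime_eval_of_modEq (f : ℤ[X]) {m u v : ℤ} (h : u ≡ v [ZMOD m])
    (hv : IsCoprime m (f.eval v)) : IsCoprime m (f.eval u) :=
  Int.ModEq.isCoprime (Int.modEq_iff_dvd.mpr (h.dvd.trans (sub_dvd_eval_sub v u f))) hv

theorem Polynomial.exists_isCoprime_eval (f : ℤ[X]) {n : ℕ} (hn : n ≠ 0)
    (h : ∀ p : ℕ, p.Prime → p ∣ n → ∃ r, ¬ (p : ℤ) ∣ f.eval r) :
    ∃ u, IsCoprime (n : ℤ) (f.eval u) := by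
  induction n using Nat.recOnPosPrimePosCoprime with
  | zero => exact absurd rfl hn
  | one => exact ⟨0, by simpa using isCoprime_one_left⟩
  | prime_pow p k hp _ =>
    obtain ⟨r, hr⟩ := h p hp (dvd_pow_self p (by omega))
    refine ⟨r, ?_⟩
    push_cast
    exact ((Nat.prime_iff_prime_int.mp hp).irreducible.coprime_iff_not_dvd.mpr hr).pow_left
  | coprime a b _ _ hab iha ihb =>
    obtain ⟨ua, hua⟩ := iha (left_ne_zero_of_mul hn) fun p hp hpa => h p hp (hpa.mul_right b)
    obtain ⟨ub, hub⟩ := ihb (right_ne_zero_of_mul hn) fun p hp hpb => h p hp (hpb.mul_left a)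
    obtain ⟨u, hu_a, hu_b⟩ := (Nat.isCoprime_iff_coprime.mpr hab).exists_modEq_and_modEq ua ub
    refine ⟨u, ?_⟩
    push_cast
    exact (f.isCoprime_eval_of_modEq hu_a hua).mul_left (f.isCoprime_eval_of_modEq hu_b hub)

theorem Polynomial.exists_not_dvd_eval_of_natDegree_lt (f : ℤ[X]) {p : ℕ} [Fact p.Prime]
    (hf : f.map (Int.castRingHom (ZMod p)) ≠ 0) (hdeg : f.natDegree < p) :
    ∃ r : ℤ, ¬ (p : ℤ) ∣ f.eval r := by
  have hcard : (f.map (Int.castRingHom (ZMod p))).natDegree < Cardinal.mk (ZMod p) := by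
    rw [Cardinal.mk_fintype, ZMod.card]
    exact_mod_cast (natDegree_map_le).trans_lt hdeg
  obtain ⟨x, hx⟩ := exists_eval_ne_zero_of_natDegree_lt_card _ hf hcard
  refine ⟨(x.val : ℤ), fun hdvd => hx ?_⟩
  have hx_val : ((x.val : ℤ) : ZMod p) = x := by simp
  rw [← hx_val, eval_intCast_map, Int.coe_castRingHom, ZMod.intCast_zmod_eq_zero_iff_dvd]
  exact hdvd

theorem exists_not_dvd_mul_two_mul_add_one_mul_add {c : ℤ} (hc2 : Even c) (hc3 : ¬ 3 ∣ c - 1)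
    {p : ℕ} (hp : p.Prime) : ∃ r : ℤ, ¬ (p : ℤ) ∣ (X * (2 * X + 1) * (X + C c)).eval r := by
  simp only [eval_mul, eval_add, eval_X, eval_C, eval_ofNat, eval_one]
  obtain rfl | rfl | hp5 : p = 2 ∨ p = 3 ∨ 5 ≤ p := by
    have h4 : p ≠ 4 := by rintro rfl; norm_num at hp
    have := hp.two_le
    omega
  · obtain ⟨k, rfl⟩ := hc2
    exact ⟨1, by omega⟩
  · exact ⟨-1, by simpa [neg_add_eq_sub] using hc3⟩
  · have := Fact.mk hp
    have hmap : (X * (2 * X + 1) * (X + C c)).map (Int.castRingHom (ZMod p)) ≠ 0 := by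
      have h2X1 : (2 * X + 1 : (ZMod p)[X]) ≠ 0 := fun h => by simpa using congrArg (eval 0) h
      simp only [Polynomial.map_mul, Polynomial.map_add, Polynomial.map_X, Polynomial.map_C,
        Polynomial.map_ofNat, Polynomial.map_one]
      exact mul_ne_zero (mul_ne_zero X_ne_zero h2X1) (X_add_C_ne_zero _)
    have hdeg : (X * (2 * X + 1) * (X + C c)).natDegree ≤ 3 := by compute_degree
    simpa using exists_not_dvd_eval_of_natDegree_lt _ hmap (by omega)

theorem exists_isCoprime_two_mul_add_one_add {D c : ℤ} (hD : D ≠ 0) (hc2 : Even c)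
    (hc3 : ¬ 3 ∣ c - 1) :
    ∃ u, IsCoprime D u ∧ IsCoprime D (2 * u + 1) ∧ IsCoprime D (u + c) := by
  obtain ⟨u, hu⟩ := (X * (2 * X + 1) * (X + C c)).exists_isCoprime_eval
    (Int.natAbs_ne_zero.mpr hD) fun _ hp _ => exists_not_dvd_mul_two_mul_add_one_mul_add hc2 hc3 hp
  rw [Int.natCast_natAbs] at hu
  simp only [eval_mul, eval_add, eval_X, eval_C, eval_ofNat, eval_one] at hu
  replace hu := hu.of_isCoprime_of_dvd_left (self_dvd_abs D)
  rw [IsCoprime.mul_right_iff, IsCoprime.mul_right_iff] at hu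
  exact ⟨u, hu.1.1, hu.1.2, hu.2⟩

theorem exists_isCoprime_sub_mul_sub_one_modEq {D ε : ℤ} (hD : D ≠ 0) (hε : IsUnit ε) (b : ℤ)
    (h3 : ¬ 3 ∣ 2 * ε * b - 1) :
    ∃ v₁ v₂, IsCoprime D v₁ ∧ IsCoprime D v₂ ∧ (v₁ - ε) * (v₂ - 1) ≡ 4 * b [ZMOD D] := by
  obtain ⟨u, ⟨s, t, hst⟩, hu2, huc⟩ :=
    exists_isCoprime_two_mul_add_one_add hD ⟨ε * b, by ring⟩ (c := 2 * ε * b) h3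
  have hεε := Int.isUnit_mul_self hε
  refine ⟨ε + 2 * b * t, 2 * u + 1, ?_, hu2, Int.modEq_iff_dvd.mpr ⟨4 * b * s, ?_⟩⟩
  · have hv₁u : (ε + 2 * b * t) * u ≡ ε * (u + 2 * ε * b) [ZMOD D] :=
      Int.modEq_iff_dvd.mpr ⟨2 * b * s, by linear_combination 2 * b * hεε - 2 * b * hst⟩
    exact (hv₁u.isCoprime ((isCoprime_mul_unit_left_right hε _ _).mpr huc)).of_mul_right_left
  · linear_combination -4 * b * hst

theorem stmt1_general (D a : ℤ) (hD : 0 < D) (ha : 4 ∣ a) :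
    ∃ v₁ v₂ : ℤ, Int.gcd D v₁ = 1 ∧ Int.gcd D v₂ = 1 ∧
      ((v₁ - 1) * (v₂ - 1) ≡ a [ZMOD D] ∨ (v₁ + 1) * (v₂ - 1) ≡ a [ZMOD D]) := by
  obtain ⟨b, rfl⟩ := ha
  obtain ⟨ε, hε, h3⟩ : ∃ ε : ℤ, (ε = 1 ∨ ε = -1) ∧ ¬ 3 ∣ 2 * ε * b - 1 := by
    by_cases h : 3 ∣ 2 * b - 1
    · exact ⟨-1, .inr rfl, by omega⟩
    · exact ⟨1, .inl rfl, by simpa using h⟩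
  obtain ⟨v₁, v₂, h₁, h₂, hv⟩ :=
    exists_isCoprime_sub_mul_sub_one_modEq hD.ne' (Int.isUnit_iff.mpr hε) b h3
  refine ⟨v₁, v₂, Int.isCoprime_iff_gcd_eq_one.mp h₁, Int.isCoprime_iff_gcd_eq_one.mp h₂, ?_⟩
  rcases hε with rfl | rfl
  · exact .inl hv
  · exact .inr (by simpa using hv)

theorem stmt1 (D a : ℤ) (hD : 0 < D) (hD4 : 4 ∣ D) (ha : 4 ∣ a) :
    ∃ v₁ v₂ : ℤ, Int.gcd D v₁ = 1 ∧ Int.gcd D v₂ = 1 ∧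
      ((v₁ - 1) * (v₂ - 1) ≡ a [ZMOD D] ∨ (v₁ + 1) * (v₂ - 1) ≡ a [ZMOD D]) :=
  stmt1_general D a hD ha
end

section
/- Let $P$ be a prime, let $d$ be a positive integer all of whose prime factors are at most $P$, and write $\prod_{p \le P}(p-1) = \prod_{p \le P} p^{\beta(p)}$. Let $\gamma \ge \max_p \beta(p)$ and set $D = d \prod_{p \le P} p^\gamma$. Then for every integer $j \ge 1$, the number $D^j$ is a value of Euler's totient function, i.e., there exists $n$ with $\phi(n) = D^j$. -/
private lemma totient_prod_pow (S : Finset ℕ) (hS : ∀ p ∈ S, p.Prime) (e : ℕ → ℕ) :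
    Nat.totient (∏ p ∈ S, p ^ e p) = ∏ p ∈ S, Nat.totient (p ^ e p) := by
  classical
  induction S using Finset.induction_on with
  | empty => simp
  | @insert a s ha ih =>
    rw [Finset.prod_insert ha, Finset.prod_insert ha, Nat.totient_mul, ih]
    · intro p hp; exact hS p (Finset.mem_insert_of_mem hp)
    · apply Nat.Coprime.pow_left
      apply Nat.Coprime.prod_right
      intro p hp
      apply Nat.Coprime.pow_right
      exact (Nat.coprime_primes (hS a (Finset.mem_insert_self a s))
        (hS p (Finset.mem_insert_of_mem hp))).mpr (fun h => ha (h ▸ hp))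

private lemma prod_pow_factorization_eq (S : Finset ℕ) (hS : ∀ p ∈ S, p.Prime)
    (N : ℕ) (hN : N ≠ 0) (hsub : N.primeFactors ⊆ S) :
    ∏ p ∈ S, p ^ N.factorization p = N := by
  conv_rhs => rw [← Nat.factorization_prod_pow_eq_self hN]
  rw [Finsupp.prod]
  apply (Finset.prod_subset (by rwa [Nat.support_factorization]) ?_).symm
  intro x _ hx
  rw [Finsupp.notMem_support_iff.mp hx, pow_zero]

theorem stmt4 (P : ℕ) (hP : P.Prime) (d : ℕ) (hd : 0 < d)
    (hdfac : ∀ p ∈ d.primeFactors, p ≤ P)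
    (β : ℕ → ℕ)
    (hβ : ∀ p, β p =
      (∏ q ∈ Finset.filter Nat.Prime (Finset.range (P + 1)), (q - 1)).factorization p)
    (γ : ℕ) (hγ : ∀ p ∈ Finset.filter Nat.Prime (Finset.range (P + 1)), β p ≤ γ)
    (D : ℕ) (hD : D = d * ∏ p ∈ Finset.filter Nat.Prime (Finset.range (P + 1)), p ^ γ) :
    ∀ j : ℕ, 1 ≤ j → ∃ n : ℕ, Nat.totient n = D ^ j := by
  classical
  set S := Finset.filter Nat.Prime (Finset.range (P + 1)) with hS
  have hSprime : ∀ p ∈ S, p.Prime := fun p hp => (Finset.mem_filter.mp hp).2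
  have hSle : ∀ p ∈ S, p ≤ P := fun p hp =>
    Nat.lt_succ_iff.mp (Finset.mem_range.mp (Finset.mem_filter.mp hp).1)
  have hmemS : ∀ p : ℕ, p.Prime → p ≤ P → p ∈ S := fun p hp hle =>
    Finset.mem_filter.mpr ⟨Finset.mem_range.mpr (Nat.lt_succ_iff.mpr hle), hp⟩
  set Q := ∏ q ∈ S, (q - 1) with hQ
  have hQpos : 0 < Q := Finset.prod_pos (fun q hq =>
    Nat.sub_pos_of_lt (hSprime q hq).one_lt)
  have hDpos : 0 < D := by
    rw [hD]
    exact Nat.mul_pos hd (Finset.prod_pos fun p hp => pow_pos (hSprime p hp).pos γ)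
  -- prime factors of Q are in S
  have hQfac : Q.primeFactors ⊆ S := by
    intro r hr
    obtain ⟨hrp, hrd, _⟩ := Nat.mem_primeFactors.mp hr
    obtain ⟨q, hq, hrq⟩ := hrp.prime.exists_mem_finset_dvd hrd
    have : r ≤ q - 1 := Nat.le_of_dvd (Nat.sub_pos_of_lt (hSprime q hq).one_lt) hrq
    exact hmemS r hrp (le_trans this (le_trans (Nat.sub_le q 1) (hSle q hq)))
  intro j hj
  set m := D ^ j with hm
  have hmpos : 0 < m := pow_pos hDpos j
  have hmfac : m.primeFactors ⊆ S := by
    intro r hr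
    obtain ⟨hrp, hrd, _⟩ := Nat.mem_primeFactors.mp hr
    have hrD : r ∣ D := hrp.dvd_of_dvd_pow hrd
    rw [hD] at hrD
    rcases (Nat.Prime.dvd_mul hrp).mp hrD with h | h
    · exact hmemS r hrp (hdfac r (Nat.mem_primeFactors.mpr ⟨hrp, h, hd.ne'⟩))
    · obtain ⟨q, hq, hrq⟩ := hrp.prime.exists_mem_finset_dvd h
      have := (Nat.Prime.dvd_of_dvd_pow hrp hrq)
      exact hmemS r hrp (le_trans (Nat.le_of_dvd (hSprime q hq).pos this) (hSle q hq))
  -- β p ≤ m.factorization p for p ∈ S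
  have hβle : ∀ p ∈ S, β p ≤ m.factorization p := by
    intro p hp
    have hpprime := hSprime p hp
    have h1 : p ^ γ ∣ m := by
      calc p ^ γ ∣ ∏ q ∈ S, q ^ γ := Finset.dvd_prod_of_mem _ hp
        _ ∣ D := by rw [hD]; exact Dvd.intro_left d rfl
        _ ∣ m := dvd_pow_self D (by omega)
    have h2 : γ ≤ m.factorization p :=
      (Nat.Prime.pow_dvd_iff_le_factorization hpprime hmpos.ne').mp h1
    exact le_trans (hγ p hp) h2
  -- the construction
  refine ⟨∏ p ∈ S, p ^ (m.factorization p - β p + 1), ?_⟩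
  rw [totient_prod_pow S hSprime]
  have step : ∀ p ∈ S, Nat.totient (p ^ (m.factorization p - β p + 1)) =
      p ^ (m.factorization p - β p) * (p - 1) := by
    intro p hp
    rw [Nat.totient_prime_pow (hSprime p hp) (Nat.succ_pos _), Nat.succ_sub_one]
  rw [Finset.prod_congr rfl step, Finset.prod_mul_distrib]
  have hQeq : ∏ p ∈ S, (p - 1) = ∏ p ∈ S, p ^ β p := by
    rw [show (∏ p ∈ S, (p-1)) = Q from rfl,
      ← prod_pow_factorization_eq S hSprime Q hQpos.ne' hQfac]
    exact Finset.prod_congr rfl fun p _ => by rw [hβ p]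
  rw [hQeq, ← Finset.prod_mul_distrib]
  have : ∀ p ∈ S, p ^ (m.factorization p - β p) * p ^ β p = p ^ m.factorization p := by
    intro p hp
    rw [← pow_add, Nat.sub_add_cancel (hβle p hp)]
  rw [Finset.prod_congr rfl this]
  exact prod_pow_factorization_eq S hSprime m hmpos.ne' hmfac
end

section
/- Let $a_0 = \prod_{p \le 47} p$ and $b_0 = \mathrm{lcm}[1, 2, \dots, 49]$, and let $j \in \{1, \dots, 49\}$. If $u, v$ are primes, each coprime to $a_0 b_0 / j$, with $u - v = k j a_0$ for some positive integer $k$, then $\phi(a_0 b_0 u / j) - \phi(a_0 b_0 v / j) = \phi(a_0 b_0)\, a_0\, k$. -/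
theorem aux_totient_mul (j : ℕ) : ∀ m : ℕ, 0 < m →
    (∀ p : ℕ, p.Prime → p ∣ j → p ∣ m) → Nat.totient (m * j) = Nat.totient m * j := by
  induction j using Nat.strong_induction_on with
  | _ j ih =>
    intro m hm hp
    rcases eq_or_ne j 0 with rfl | hj0
    · simp
    rcases eq_or_ne j 1 with rfl | hj1
    · simp
    have hj2 : 2 ≤ j := by omega
    set p := j.minFac with hpdef
    have hpp : p.Prime := Nat.minFac_prime hj1
    have hpd : p ∣ j := Nat.minFac_dvd j
    have hpm : p ∣ m := hp p hpp hpd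
    have hjfac : j = p * (j / p) := (Nat.mul_div_cancel' hpd).symm
    have hlt : j / p < j := Nat.div_lt_self (by omega) hpp.one_lt
    have h1 : p * (m * (j / p)) = m * j := by
      rw [mul_left_comm, Nat.mul_div_cancel' hpd]
    rw [← h1, Nat.totient_mul_of_prime_of_dvd hpp (Dvd.dvd.mul_right hpm _),
      ih (j / p) hlt m hm (fun q hq hqd => hp q hq (hqd.trans (Nat.div_dvd_of_dvd hpd)))]
    rw [mul_left_comm, Nat.mul_div_cancel' hpd]

theorem stmt7 (a₀ b₀ : ℕ)
    (ha₀ : a₀ = ∏ p ∈ Finset.filter Nat.Prime (Finset.range 48), p)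
    (hb₀ : b₀ = (Finset.Icc 1 49).lcm id)
    (j : ℕ) (hj : j ∈ Finset.Icc 1 49)
    (u v : ℕ) (hu : u.Prime) (hv : v.Prime)
    (hcu : Nat.Coprime u (a₀ * b₀ / j)) (hcv : Nat.Coprime v (a₀ * b₀ / j))
    (k : ℕ) (hk : 0 < k) (huv : u - v = k * j * a₀) (hvu : v < u) :
    Nat.totient (a₀ * b₀ * u / j) - Nat.totient (a₀ * b₀ * v / j)
      = Nat.totient (a₀ * b₀) * a₀ * k := by
  simp only [Finset.mem_Icc] at hj
  have hj0 : 0 < j := hj.1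
  have hjb : j ∣ b₀ := hb₀ ▸ Finset.dvd_lcm (by simp [Finset.mem_Icc]; omega)
  have ha0 : 0 < a₀ := by
    rw [ha₀]; exact Finset.prod_pos (fun p hp => (Finset.mem_filter.mp hp).2.pos)
  have hb0 : 0 < b₀ := by
    rw [hb₀]
    exact Nat.pos_of_ne_zero (fun h => by
      have := Finset.lcm_eq_zero_iff (s := Finset.Icc 1 49) (f := (id : ℕ → ℕ)) |>.mp h
      simp [Finset.mem_Icc] at this)
  set m := a₀ * b₀ / j with hmdef
  have hjab : j ∣ a₀ * b₀ := hjb.mul_left a₀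
  have hmj : m * j = a₀ * b₀ := Nat.div_mul_cancel hjab
  have hm0 : 0 < m := by
    have := Nat.div_pos (Nat.le_of_dvd (by positivity) hjab) hj0
    exact this
  -- a₀ ∣ m
  have ham : a₀ ∣ m := by
    obtain ⟨c, hc⟩ := hjb
    rw [hmdef, hc, show a₀ * (j * c) = j * (a₀ * c) by ring, Nat.mul_div_cancel_left _ hj0]
    exact dvd_mul_right _ _
  -- primes of j divide m
  have hprames : ∀ p : ℕ, p.Prime → p ∣ j → p ∣ m := by
    intro p hpp hpj
    have hple : p ≤ 47 := by
      have h1 := Nat.le_of_dvd hj0 hpj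
      by_contra h
      have h2 : p = 48 ∨ p = 49 := by omega
      rcases h2 with rfl | rfl <;> exact absurd hpp (by decide)
    have hpa : p ∣ a₀ := by
      rw [ha₀]
      exact Finset.dvd_prod_of_mem _ (by
        simp only [Finset.mem_filter, Finset.mem_range]
        exact ⟨by omega, hpp⟩)
    exact hpa.trans ham
  have htot : Nat.totient (a₀ * b₀) = Nat.totient m * j := by
    rw [← hmj]; exact aux_totient_mul j m hm0 hprames
  have hmu : a₀ * b₀ * u / j = m * u := by
    rw [← hmj, show m * j * u = m * u * j by ring, Nat.mul_div_cancel _ hj0]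
  have hmv : a₀ * b₀ * v / j = m * v := by
    rw [← hmj, show m * j * v = m * v * j by ring, Nat.mul_div_cancel _ hj0]
  rw [hmu, hmv, Nat.totient_mul hcu.symm, Nat.totient_mul hcv.symm,
    Nat.totient_prime hu, Nat.totient_prime hv, htot]
  have huv' : u - v = k * j * a₀ := huv
  have h2 : 2 ≤ v := hv.two_le
  have : (u - 1) - (v - 1) = k * j * a₀ := by omega
  rw [← Nat.mul_sub, this]
  ring
end

section
/- Let $D > 1$ and $v$ be coprime positive integers. Then the set of 50 linear forms $f_j(x) = D^j x - v$ for $j = 1, \dots, 50$ is admissible: for every prime $p$ there is an integer $x$ with $p \nmid \prod_{j=1}^{50} (D^j x - v)$. -/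
theorem stmt16 (D v : ℕ) (hD : 1 < D) (hv : 0 < v) (hDv : Nat.Coprime D v) :
    ∀ p : ℕ, p.Prime → ∃ x : ℤ,
      ¬ (p : ℤ) ∣ ∏ j ∈ Finset.Icc 1 50, ((D : ℤ) ^ j * x - (v : ℤ)) := by
  intro p hp
  have hpp : Prime ((p : ℤ)) := Nat.prime_iff_prime_int.mp hp
  by_cases hpv : (p : ℤ) ∣ (v : ℤ)
  · refine ⟨1, fun h => ?_⟩
    obtain ⟨j, hj, hdvd⟩ := hpp.exists_mem_finset_dvd h
    have hpDj : (p : ℤ) ∣ (D : ℤ) ^ j := by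
      have := dvd_add hdvd hpv
      simpa using this
    have hpD : (p : ℤ) ∣ (D : ℤ) := hpp.dvd_of_dvd_pow hpDj
    have h1 : (p : ℕ) ∣ D := Int.ofNat_dvd.mp (by exact_mod_cast hpD)
    have h2 : (p : ℕ) ∣ v := Int.ofNat_dvd.mp (by exact_mod_cast hpv)
    exact hp.one_lt.ne' (Nat.eq_one_of_dvd_coprimes hDv h1 h2)
  · refine ⟨0, fun h => ?_⟩
    have : (p : ℤ) ∣ (-(v : ℤ)) ^ 50 := by
      simpa [Finset.prod_const] using h
    exact hpv ((dvd_neg).mp (hpp.dvd_of_dvd_pow this))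
end

section
/- Let $D, v, l, j$ be positive integers with $\phi(l) = D^j$, and let $p_1 = D^{j_1} x - v$ and $p_2 = D^{j_1 + j} x - v$ be primes (for some positive integers $j_1, x$) with $\gcd(p_1, l) = 1$. Then $\phi(p_2) - \phi(p_1 l) = (v+1)(D^j - 1)$. -/
theorem stmt17 (D v l j j₁ x : ℕ) (hD : 0 < D) (hv : 0 < v) (hl : 0 < l)
    (hj : 0 < j) (hj₁ : 0 < j₁) (hx : 0 < x)
    (hφl : Nat.totient l = D ^ j)
    (p₁ p₂ : ℕ) (hp₁def : (p₁ : ℤ) = (D : ℤ) ^ j₁ * x - v)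
    (hp₂def : (p₂ : ℤ) = (D : ℤ) ^ (j₁ + j) * x - v)
    (hp₁ : p₁.Prime) (hp₂ : p₂.Prime) (hcop : Nat.gcd p₁ l = 1) :
    (Nat.totient p₂ : ℤ) - (Nat.totient (p₁ * l) : ℤ)
      = ((v : ℤ) + 1) * ((D : ℤ) ^ j - 1) := by
  rw [Nat.totient_mul hcop, Nat.totient_prime hp₂, Nat.totient_prime hp₁, hφl]
  have h1 : 1 ≤ p₁ := hp₁.one_lt.le
  have h2 : 1 ≤ p₂ := hp₂.one_lt.le
  push_cast [h1, h2]
  rw [hp₁def, hp₂def, pow_add]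
  ring
end
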